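/- Let u₁, u₂, u₃ be piecewise continuous right-continuous functions ℝ → ℝⁿ with discontinuity sequences θ⁽¹⁾, θ⁽²⁾, θ⁽³⁾ ∈ Θ respectively. Define u ε v to mean θ_u ε θ_v (ε-equivalence of discontinuity sequences) and ‖u(t) − v(t)‖ < ε for all t outside the union of ε-neighborhoods of all discontinuity points of u and of v. Then u₁ ε₁ u₂ and u₂ ε₂ u₃ imply u₁ (ε₁+ε₂) u₃. -/

import Mathlib

open Filter

def InTheta (θ : ℤ → ℝ) : Prop :=
  StrictMono θ ∧ Tendsto θ atTop atTop ∧ Tendsto θ atBot atBot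

def IsRepr (γ θ : ℤ → ℝ) : Prop :=
  Monotone γ ∧ Set.range γ = Set.range θ ∧
    ∃ m₀ : ℕ, ∀ x : ℝ, {k : ℤ | γ k = x}.Finite ∧ {k : ℤ | γ k = x}.ncard ≤ m₀

def SeqEquiv (θ θ' : ℤ → ℝ) (ε : ℝ) : Prop :=
  ∃ γ γ' : ℤ → ℝ, IsRepr γ θ ∧ IsRepr γ' θ' ∧ ∃ c : ℝ, c < ε ∧ ∀ i, |γ i - γ' i| ≤ c

/-- ε-equivalence of piecewise continuous functions u, v with discontinuity
sequences θu, θv: the sequences are ε-equivalent and the values are ε-close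
outside the ε-neighborhoods of all discontinuity points. -/
def FunEquiv {n : ℕ} (u : ℝ → (Fin n → ℝ)) (θu : ℤ → ℝ)
    (v : ℝ → (Fin n → ℝ)) (θv : ℤ → ℝ) (ε : ℝ) : Prop :=
  SeqEquiv θu θv ε ∧
    ∀ t : ℝ, (∀ i : ℤ, ε ≤ |t - θu i| ∧ ε ≤ |t - θv i|) → ‖u t - v t‖ < ε

/-!
Representatives of a strictly increasing `θ` are exactly the sequences `θ ∘ f` with
`f : ℤ → ℤ` a monotone surjection with boundedly finite fibres. Two such maps `f`, `g` admit
a common refinement `f ∘ α = g ∘ β`: if `L` bounds all fibres, send `i` to the `(i % L)`-th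
point (capped at the last one) of the fibre over `i / L`. Precomposing the outer
representatives with `α` and `β` aligns the representatives of `θ₁` and `θ₃` through a common
representative of `θ₂`, and the triangle inequality applies termwise. For the values, a point
`(ε₁ + ε₂)`-far from `θ₁` and `θ₃` is more than `ε₂`-far resp. `ε₁`-far from `θ₂`, because each
point of `θ₂` is within `ε₁` of a point of `θ₁` and within `ε₂` of a point of `θ₃`.
-/

open Function

def FibersBoundedBy {X Y : Type*} (f : X → Y) (m : ℕ) : Prop :=
  ∀ y, {x | f x = y}.Finite ∧ {x | f x = y}.ncard ≤ m

namespace FibersBoundedBy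

variable {X Y Z : Type*} {f : X → Y} {g : Y → Z} {m n : ℕ}

theorem mono (hf : FibersBoundedBy f m) (hmn : m ≤ n) : FibersBoundedBy f n :=
  fun y => ⟨(hf y).1, (hf y).2.trans hmn⟩

theorem of_comp (h : FibersBoundedBy (g ∘ f) m) : FibersBoundedBy f m := fun y =>
  have hsub : {x | f x = y} ⊆ {x | g (f x) = g y} := fun _ hx => congrArg g hx
  ⟨(h (g y)).1.subset hsub, (Set.ncard_le_ncard hsub (h (g y)).1).trans (h (g y)).2⟩

theorem comp (hg : FibersBoundedBy g m) (hf : FibersBoundedBy f n) :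
    FibersBoundedBy (g ∘ f) (m * n) := by
  intro z
  set t := (hg z).1.toFinset
  have hfib : {x | (g ∘ f) x = z} = ⋃ y ∈ t, {x | f x = y} := by ext x; simp [t]
  rw [hfib]
  refine ⟨t.finite_toSet.biUnion fun y _ => (hf y).1, ?_⟩
  calc (⋃ y ∈ t, {x | f x = y}).ncard ≤ ∑ y ∈ t, {x | f x = y}.ncard := t.set_ncard_biUnion_le _
    _ ≤ ∑ _y ∈ t, n := Finset.sum_le_sum fun y _ => (hf y).2
    _ = t.card * n := by simp
    _ ≤ m * n := by
      gcongr
      rw [← Set.ncard_eq_toFinset_card _ (hg z).1]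
      exact (hg z).2

end FibersBoundedBy

theorem fibersBoundedBy_ediv {L : ℕ} (hL : 0 < L) : FibersBoundedBy (fun i : ℤ => i / L) L := by
  intro j
  have hfib : {i : ℤ | i / L = j} = Set.Ico (j * L) (j * L + L) := by
    ext i
    simp [Int.ediv_eq_iff_of_pos (Int.natCast_pos.2 hL)]
  rw [hfib, ← Finset.coe_Ico, Set.ncard_coe_finset, Int.card_Ico]
  exact ⟨Finset.finite_toSet _, by simp⟩

theorem Set.Finite.exists_monotone_enum {α : Type*} [LinearOrder α] {s : Set α} (hs : s.Finite)
    (hne : s.Nonempty) :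
    ∃ e : ℕ → α, Monotone e ∧ (∀ r, e r ∈ s) ∧ ∀ a ∈ s, ∃ r < s.ncard, e r = a := by
  set t := hs.toFinset
  have ht : 0 < t.card := Finset.card_pos.2 (hs.toFinset_nonempty.2 hne)
  set emb := t.orderEmbOfFin rfl
  refine ⟨fun r => emb ⟨min r (t.card - 1), by omega⟩, fun r r' hr => emb.monotone ?_,
    fun r => hs.mem_toFinset.1 (t.orderEmbOfFin_mem rfl _), fun a ha => ?_⟩
  · simp only [Fin.mk_le_mk]
    omega
  · obtain ⟨⟨r, hr⟩, rfl⟩ : a ∈ Set.range emb := by rw [t.range_orderEmbOfFin]; simpa [t]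
    refine ⟨r, by rwa [Set.ncard_eq_toFinset_card _ hs], ?_⟩
    simp [Nat.min_eq_left (by omega : r ≤ t.card - 1)]

def IsReindexing (α : ℤ → ℤ) : Prop :=
  Monotone α ∧ Surjective α ∧ ∃ L, FibersBoundedBy α L

theorem exists_reindexing_comp_eq_ediv {f : ℤ → ℤ} (hf : Monotone f) (hfs : Surjective f)
    {L : ℕ} (hfL : FibersBoundedBy f L) : ∃ α, IsReindexing α ∧ ∀ i, f (α i) = i / L := by
  have hL : 0 < L := by
    obtain ⟨x, hx⟩ := hfs 0
    exact ((Set.ncard_pos (hfL 0).1).2 ⟨x, hx⟩).trans_le (hfL 0).2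
  have hL' : 0 < (L : ℤ) := Int.natCast_pos.2 hL
  have hblock : ∀ j, ∃ e : ℕ → ℤ, Monotone e ∧ (∀ r, f (e r) = j) ∧
      ∀ a, f a = j → ∃ r < L, e r = a := fun j => by
    obtain ⟨e, he, hef, hesurj⟩ := (hfL j).1.exists_monotone_enum (hfs j)
    refine ⟨e, he, hef, fun a ha => ?_⟩
    obtain ⟨r, hr, hra⟩ := hesurj a ha
    exact ⟨r, hr.trans_le (hfL j).2, hra⟩
  choose e he hef hesurj using hblock
  set α : ℤ → ℤ := fun i => e (i / L) (i % L).toNat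
  have hfα : ∀ i, f (α i) = i / L := fun i => hef _ _
  refine ⟨α, ⟨fun i i' hii => ?_, fun a => ?_, L, ?_⟩, hfα⟩
  · rcases (Int.ediv_le_ediv hL' hii).lt_or_eq with hlt | heq
    · exact (hf.reflect_lt (by rwa [hfα, hfα])).le
    · simp only [α, heq]
      apply he
      have := Int.emod_add_mul_ediv i L
      have := Int.emod_add_mul_ediv i' L
      rw [heq] at *
      omega
  · obtain ⟨r, hr, hra⟩ := hesurj (f a) a rfl
    obtain ⟨hq, hr'⟩ := (Int.ediv_emod_unique hL').2 (⟨rfl, by omega, by omega⟩ :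
      (r : ℤ) + L * f a = r + L * f a ∧ 0 ≤ (r : ℤ) ∧ (r : ℤ) < L)
    exact ⟨r + L * f a, by simp only [α, hq, hr', Int.toNat_natCast, hra]⟩
  · exact FibersBoundedBy.of_comp (g := f)
      ((funext hfα : f ∘ α = fun i => i / (L : ℤ)) ▸ fibersBoundedBy_ediv hL)

theorem IsReindexing.exists_comp_eq {f g : ℤ → ℤ} (hf : IsReindexing f) (hg : IsReindexing g) :
    ∃ α β, IsReindexing α ∧ IsReindexing β ∧ f ∘ α = g ∘ β := by
  obtain ⟨hfm, hfs, Lf, hfL⟩ := hf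
  obtain ⟨hgm, hgs, Lg, hgL⟩ := hg
  obtain ⟨α, hα, hfα⟩ := exists_reindexing_comp_eq_ediv hfm hfs (hfL.mono (le_max_left Lf Lg))
  obtain ⟨β, hβ, hgβ⟩ := exists_reindexing_comp_eq_ediv hgm hgs (hgL.mono (le_max_right Lf Lg))
  exact ⟨α, β, hα, hβ, funext fun i => (hfα i).trans (hgβ i).symm⟩

namespace IsRepr

variable {γ θ : ℤ → ℝ}

theorem exists_reindexing (hθ : StrictMono θ) (h : IsRepr γ θ) :
    ∃ f, IsReindexing f ∧ θ ∘ f = γ := by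
  obtain ⟨hmono, hrange, m, hm⟩ := h
  choose f hf using fun i => (hrange ▸ Set.mem_range_self i : γ i ∈ Set.range θ)
  have hfib : ∀ j, {k | f k = j} = {k | γ k = θ j} := fun j => by
    ext k
    simp [← hf k, hθ.injective.eq_iff]
  refine ⟨f, ⟨fun i i' hii => hθ.le_iff_le.1 ?_, fun j => ?_, m, fun j => hfib j ▸ hm (θ j)⟩,
    funext hf⟩
  · rw [hf, hf]
    exact hmono hii
  · obtain ⟨i, hi⟩ := (hrange.symm ▸ Set.mem_range_self j : θ j ∈ Set.range γ)
    exact ⟨i, hθ.injective ((hf i).trans hi)⟩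

theorem comp_reindexing (h : IsRepr γ θ) {α : ℤ → ℤ} (hα : IsReindexing α) :
    IsRepr (γ ∘ α) θ := by
  obtain ⟨hmono, hrange, m, hm⟩ := h
  obtain ⟨hαm, hαs, L, hαL⟩ := hα
  exact ⟨hmono.comp hαm, by rw [Set.range_comp, hαs.range_eq, Set.image_univ, hrange], m * L,
    FibersBoundedBy.comp (g := γ) hm hαL⟩

end IsRepr

namespace SeqEquiv

variable {θ₁ θ₂ θ₃ : ℤ → ℝ} {ε₁ ε₂ : ℝ}

theorem pos (h : SeqEquiv θ₁ θ₂ ε₁) : 0 < ε₁ := by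
  obtain ⟨γ, γ', -, -, c, hc, hγ⟩ := h
  exact ((abs_nonneg _).trans (hγ 0)).trans_lt hc

theorem symm (h : SeqEquiv θ₁ θ₂ ε₁) : SeqEquiv θ₂ θ₁ ε₁ := by
  obtain ⟨γ, γ', hγ, hγ', c, hc, hγγ'⟩ := h
  exact ⟨γ', γ, hγ', hγ, c, hc, fun i => abs_sub_comm (γ i) (γ' i) ▸ hγγ' i⟩

theorem exists_abs_sub_lt (h : SeqEquiv θ₁ θ₂ ε₁) (j : ℤ) : ∃ i, |θ₁ i - θ₂ j| < ε₁ := by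
  obtain ⟨γ, γ', hγ, hγ', c, hc, hγγ'⟩ := h
  obtain ⟨k, hk⟩ : θ₂ j ∈ Set.range γ' := hγ'.2.1 ▸ Set.mem_range_self j
  obtain ⟨i, hi⟩ : γ k ∈ Set.range θ₁ := hγ.2.1 ▸ Set.mem_range_self k
  exact ⟨i, by rw [hi, ← hk]; exact (hγγ' k).trans_lt hc⟩

theorem lt_abs_sub_of_le {t δ : ℝ} (h : SeqEquiv θ₁ θ₂ ε₁) (ht : ∀ i, δ + ε₁ ≤ |t - θ₁ i|)
    (j : ℤ) : δ < |t - θ₂ j| := by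
  obtain ⟨i, hi⟩ := h.exists_abs_sub_lt j
  have := abs_sub_le t (θ₂ j) (θ₁ i)
  have := ht i
  rw [abs_sub_comm] at hi
  linarith

theorem trans (h₁₂ : SeqEquiv θ₁ θ₂ ε₁) (hθ₂ : StrictMono θ₂) (h₂₃ : SeqEquiv θ₂ θ₃ ε₂) :
    SeqEquiv θ₁ θ₃ (ε₁ + ε₂) := by
  obtain ⟨γ₁, γ₂, hγ₁, hγ₂, c₁, hc₁, hγ₁₂⟩ := h₁₂
  obtain ⟨γ₂', γ₃, hγ₂', hγ₃, c₂, hc₂, hγ₂₃⟩ := h₂₃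
  obtain ⟨f, hf, rfl⟩ := hγ₂.exists_reindexing hθ₂
  obtain ⟨g, hg, rfl⟩ := hγ₂'.exists_reindexing hθ₂
  obtain ⟨α, β, hα, hβ, hfg⟩ := hf.exists_comp_eq hg
  refine ⟨γ₁ ∘ α, γ₃ ∘ β, hγ₁.comp_reindexing hα, hγ₃.comp_reindexing hβ, c₁ + c₂,
    add_lt_add hc₁ hc₂, fun i => ?_⟩
  have hmid : θ₂ (f (α i)) = θ₂ (g (β i)) := congrArg θ₂ (congrFun hfg i)
  calc |γ₁ (α i) - γ₃ (β i)|
      ≤ |γ₁ (α i) - θ₂ (f (α i))| + |θ₂ (g (β i)) - γ₃ (β i)| := hmid ▸ abs_sub_le _ _ _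
    _ ≤ c₁ + c₂ := add_le_add (hγ₁₂ _) (hγ₂₃ _)

end SeqEquiv

theorem funEquiv_triangle_general
    (n : ℕ)
    (u₁ u₂ u₃ : ℝ → (Fin n → ℝ)) (θ₁ θ₂ θ₃ : ℤ → ℝ) (ε₁ ε₂ : ℝ)
    (h₂ : InTheta θ₂)
    (h₁₂ : FunEquiv u₁ θ₁ u₂ θ₂ ε₁) (h₂₃ : FunEquiv u₂ θ₂ u₃ θ₃ ε₂) :
    FunEquiv u₁ θ₁ u₃ θ₃ (ε₁ + ε₂) := by
  obtain ⟨hθ₁₂, hu₁₂⟩ := h₁₂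
  obtain ⟨hθ₂₃, hu₂₃⟩ := h₂₃
  refine ⟨hθ₁₂.trans h₂.1 hθ₂₃, fun t ht => ?_⟩
  have hfar₁ : ∀ j, ε₂ < |t - θ₂ j| :=
    hθ₁₂.lt_abs_sub_of_le fun i => add_comm ε₁ ε₂ ▸ (ht i).1
  have hfar₃ : ∀ j, ε₁ < |t - θ₂ j| := hθ₂₃.symm.lt_abs_sub_of_le fun i => (ht i).2
  have hε₁ := hθ₁₂.pos
  have hε₂ := hθ₂₃.pos
  calc ‖u₁ t - u₃ t‖ ≤ ‖u₁ t - u₂ t‖ + ‖u₂ t - u₃ t‖ := norm_sub_le_norm_sub_add_norm_sub _ _ _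
    _ < ε₁ + ε₂ := add_lt_add
      (hu₁₂ t fun i => ⟨by linarith [(ht i).1], (hfar₃ i).le⟩)
      (hu₂₃ t fun i => ⟨(hfar₁ i).le, by linarith [(ht i).2]⟩)

/-- Lemma 6: the triangle inequality for ε-equivalence of
piecewise continuous right-continuous functions. -/
theorem funEquiv_triangle
    (n : ℕ)
    (u₁ u₂ u₃ : ℝ → (Fin n → ℝ)) (θ₁ θ₂ θ₃ : ℤ → ℝ) (ε₁ ε₂ : ℝ)
    (h₁ : InTheta θ₁) (h₂ : InTheta θ₂) (h₃ : InTheta θ₃)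
    -- u_k is piecewise continuous, right continuous, discontinuities only at θ_k
    (hpc₁ : ∀ i : ℤ, ContinuousOn u₁ (Set.Ico (θ₁ i) (θ₁ (i + 1))))
    (hpc₂ : ∀ i : ℤ, ContinuousOn u₂ (Set.Ico (θ₂ i) (θ₂ (i + 1))))
    (hpc₃ : ∀ i : ℤ, ContinuousOn u₃ (Set.Ico (θ₃ i) (θ₃ (i + 1))))
    (h₁₂ : FunEquiv u₁ θ₁ u₂ θ₂ ε₁) (h₂₃ : FunEquiv u₂ θ₂ u₃ θ₃ ε₂) :
    FunEquiv u₁ θ₁ u₃ θ₃ (ε₁ + ε₂) :=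
  funEquiv_triangle_general n u₁ u₂ u₃ θ₁ θ₂ θ₃ ε₁ ε₂ h₂ h₁₂ h₂₃
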